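/- arXiv:1705.06738 — 6 statements merged into one kernel-verified Lean document; each statement's English description precedes it below -/
import Mathlib

section
/- The homeomorphic embedding relation on finite lists over a well-quasi-ordered set, where l₁ embeds into l₂ iff l₁ is obtained from l₂ by deleting some elements and replacing remaining elements by elements below them in the quasi-order (Higman's sublist embedding), is a well-quasi-ordering: every infinite sequence of lists contains indices i < j with the i-th list embedding into the j-th list. -/
/-- Higman's sublist embedding over a base relation `r`. -/
inductive ListEmb {A : Type*} (r : A → A → Prop) : List A → List A → Prop
  | nil (l : List A) : ListEmb r [] l
  | cons {x y : A} {xs ys : List A} :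
      r x y → ListEmb r xs ys → ListEmb r (x :: xs) (y :: ys)
  | skip {l : List A} {y : A} {ys : List A} :
      ListEmb r l ys → ListEmb r l (y :: ys)

/-! Nash-Williams' minimal bad sequence argument: a bad sequence of lists that is minimal
in length consists of non-empty lists; passing to a subsequence on which the heads increase
and replacing those lists by their tails yields a shorter bad sequence. Mathlib carries this
out for `List.SublistForall₂ r`
(`Set.PartiallyWellOrderedOn.partiallyWellOrderedOn_sublistForall₂`), which is `ListEmb r`
under another name. -/

theorem List.SublistForall₂.listEmb {α : Type*} {r : α → α → Prop} {l₁ l₂ : List α}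
    (h : List.SublistForall₂ r l₁ l₂) : ListEmb r l₁ l₂ := by
  induction h with
  | nil => exact .nil _
  | cons hr _ ih => exact .cons hr ih
  | cons_right _ ih => exact .skip ih

theorem WellQuasiOrdered.mono {α : Type*} {r s : α → α → Prop} (hrs : ∀ a b, r a b → s a b)
    (hr : WellQuasiOrdered r) : WellQuasiOrdered s := fun f ↦
  let ⟨m, n, hmn, h⟩ := hr f
  ⟨m, n, hmn, hrs _ _ h⟩

theorem WellQuasiOrdered.refl {α : Type*} {r : α → α → Prop} (hr : WellQuasiOrdered r)
    (a : α) : r a a :=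
  let ⟨_, _, _, h⟩ := hr fun _ ↦ a
  h

theorem WellQuasiOrdered.sublistForall₂ {α : Type*} {r : α → α → Prop} [IsPreorder α r]
    (hr : WellQuasiOrdered r) : WellQuasiOrdered (List.SublistForall₂ r) := by
  have hlists := (Set.partiallyWellOrderedOn_of_wellQuasiOrdered hr Set.univ)
    |>.partiallyWellOrderedOn_sublistForall₂ r
  intro f
  exact hlists fun n ↦ ⟨f n, fun _ _ ↦ Set.mem_univ _⟩

theorem higman_general {A : Type*} (r : A → A → Prop)
    (htrans : ∀ a b c, r a b → r b c → r a c)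
    (hwqo : ∀ a : ℕ → A, ∃ i j, i < j ∧ r (a i) (a j)) :
    ∀ f : ℕ → List A, ∃ i j, i < j ∧ ListEmb r (f i) (f j) := by
  have : IsPreorder A r := { refl := WellQuasiOrdered.refl hwqo, trans := htrans }
  exact (WellQuasiOrdered.sublistForall₂ hwqo).mono fun _ _ ↦ List.SublistForall₂.listEmb

/-- Higman's lemma: the sublist embedding over a well-quasi-ordered set is a
well-quasi-ordering. -/
theorem higman {A : Type*} (r : A → A → Prop)
    (hrefl : ∀ a, r a a)
    (htrans : ∀ a b c, r a b → r b c → r a c)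
    (hwqo : ∀ a : ℕ → A, ∃ i j, i < j ∧ r (a i) (a j)) :
    ∀ f : ℕ → List A, ∃ i j, i < j ∧ ListEmb r (f i) (f j) :=
  higman_general r htrans hwqo
end

section
/- The relation defined on configurations (nonempty lists of timed function-application labels, each label being a pair of a function name and a natural-number timestamp, with all timestamps in one configuration distinct) by Turchin's condition is, in general, not transitive: there exist timed configurations C₁, C₂, C₃ occurring in some sequence with C₁ ◁ C₂ and C₂ ◁ C₃ but ¬(C₁ ◁ C₃). -/
/-- Function names. -/
inductive FName : Type
  | Fab | Fb | Fc | C | E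
  deriving DecidableEq

/-- A timed configuration: a list of (function name, timestamp) pairs.
Elements are numbered from 1; the `i`-th element of `C` is `C[i-1]?`. -/
abbrev TConf := List (FName × ℕ)

/-- Turchin's relation `Cᵢ ◁ Cⱼ` on timed configurations: for `k = |Cᵢ| ≤ m = |Cⱼ|`
and `δ = m - k`, there is `l` with `1 < l ≤ k` such that the elements `l+s` of `Cᵢ`
equal (name and timestamp) the elements `δ+l+s` of `Cⱼ` for `0 ≤ s ≤ k-l`, the
`(l-1)`-th element of `Cᵢ` differs from the `(δ+l-1)`-th element of `Cⱼ`, and for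
`0 < s < l` the `s`-th elements of `Cᵢ` and `Cⱼ` carry equal function names. -/
def Turchin (Ci Cj : TConf) : Prop :=
  Ci.length ≤ Cj.length ∧
  ∃ l : ℕ, 1 < l ∧ l ≤ Ci.length ∧
    (∀ s : ℕ, s ≤ Ci.length - l →
      Ci[l + s - 1]? = Cj[Cj.length - Ci.length + l + s - 1]?) ∧
    Ci[l - 2]? ≠ Cj[Cj.length - Ci.length + l - 2]? ∧
    (∀ s : ℕ, 0 < s → s < l →
      (Ci[s - 1]?).map Prod.fst = (Cj[s - 1]?).map Prod.fst)

/-!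
The counterexample is `C₁ = [(Fab,3),(Fb,2),(C,1)]`, `C₂ = [(Fab,5),(Fc,4),(Fb,2),(C,1)]`,
`C₃ = [(Fab,10),(Fc,9),(Fb,7),(E,6),(C,1)]`. Here `C₁ ◁ C₂` with `l = 2` (common suffix
`(Fb,2),(C,1)`) and `C₂ ◁ C₃` with `l = 4` (common suffix `(C,1)`, and the names of the first
three elements agree). Against `C₃`, however, `C₁` shares only the suffix `(C,1)`, which forces
`l = 3`, and then the names at position 2 differ (`Fb` versus `Fc`): the name agreement on the
prefix is not inherited along the chain because `C₂ ◁ C₃` uses a shorter suffix than `C₁ ◁ C₂`.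

Every quantifier in `Turchin` is bounded, so the relation is decidable and the three facts are
checked by evaluation.
-/

theorem turchin_iff_bounded (Ci Cj : TConf) :
    Turchin Ci Cj ↔ Ci.length ≤ Cj.length ∧
      ∃ l ≤ Ci.length, 1 < l ∧
        (∀ s ≤ Ci.length - l, Ci[l + s - 1]? = Cj[Cj.length - Ci.length + l + s - 1]?) ∧
        Ci[l - 2]? ≠ Cj[Cj.length - Ci.length + l - 2]? ∧
        ∀ s < l, 0 < s → (Ci[s - 1]?).map Prod.fst = (Cj[s - 1]?).map Prod.fst := by
  unfold Turchin
  grind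

instance : DecidableRel Turchin := fun Ci Cj =>
  decidable_of_iff' _ (turchin_iff_bounded Ci Cj)

/-- Turchin's relation is, in general, not transitive: there are timed configurations
(nonempty, with pairwise distinct timestamps) with `C₁ ◁ C₂` and `C₂ ◁ C₃` but
`¬ (C₁ ◁ C₃)`. -/
theorem turchin_not_transitive :
    ∃ C₁ C₂ C₃ : TConf,
      (C₁ ≠ [] ∧ (C₁.map Prod.snd).Nodup) ∧
      (C₂ ≠ [] ∧ (C₂.map Prod.snd).Nodup) ∧
      (C₃ ≠ [] ∧ (C₃.map Prod.snd).Nodup) ∧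
      Turchin C₁ C₂ ∧ Turchin C₂ C₃ ∧ ¬ Turchin C₁ C₃ :=
  ⟨[(.Fab, 3), (.Fb, 2), (.C, 1)], [(.Fab, 5), (.Fc, 4), (.Fb, 2), (.C, 1)],
    [(.Fab, 10), (.Fc, 9), (.Fb, 7), (.E, 6), (.C, 1)], by decide⟩
end

section
/- The encoding function from the data subset (ground expressions: symbols, nil, cons of a term and an expression, and parenthesized expressions, with no variables or function applications) into data is injective, and its image is a proper subset of the data set: in particular the datum (Var 's' name) is not in the image of the encoding. -/
/-- Ground data: nil `[]`, cons of a symbol onto data, and cons of a parenthesized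
datum onto data (no variables, no function applications). -/
inductive Data (S : Type) : Type
  | nil : Data S
  | consSym : S → Data S → Data S
  | consPar : Data S → Data S → Data S

/-- The encoding function: symbols and nil are fixed, cons distributes, and a
parenthesized datum `(d)` is encoded as `('*' : d̲)`. -/
def encode {S : Type} (star : S) : Data S → Data S
  | .nil => .nil
  | .consSym σ d => .consSym σ (encode star d)
  | .consPar p d => .consPar (.consSym star (encode star p)) (encode star d)

namespace Data

variable {S : Type}

/-- Drops the `star` that `encode star` puts at the head of every parenthesized datum. -/
def decode : Data S → Data S
  | nil => nil
  | consSym σ d => consSym σ (decode d)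
  | consPar (consSym _ p) d => consPar (decode p) (decode d)
  | consPar p d => consPar (decode p) (decode d)

theorem decode_encode (star : S) : Function.LeftInverse decode (encode star) := by
  intro d
  induction d with
  | nil => rfl
  | consSym σ d ih => simp only [encode, decode, ih]
  | consPar p d ihp ihd => simp only [encode, decode, ihp, ihd]

theorem encode_injective (star : S) : Function.Injective (encode star) :=
  (decode_encode star).injective

theorem encode_ne_consPar_consSym {star σ : S} (hσ : star ≠ σ) (e p d : Data S) :
    encode star e ≠ .consPar (.consSym σ p) d := by
  cases e <;> simp [encode, hσ]

end Data

theorem encode_injective_and_not_surjective_general {S : Type}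
    (star varSym sSym : S)
    (h₁ : star ≠ varSym) :
    Function.Injective (encode (S := S) star) ∧
      ∀ (n : S) (e : Data S),
        encode star e ≠
          .consPar (.consSym varSym (.consSym sSym (.consSym n .nil))) .nil :=
  ⟨Data.encode_injective star, fun _ e => Data.encode_ne_consPar_consSym h₁ e _ _⟩

/-- The encoding is injective and its image is a proper subset of the data set:
in particular the datum `(Var 's' n)` is not the encoding of any datum. -/
theorem encode_injective_and_not_surjective {S : Type}
    (star varSym sSym : S)
    (h₁ : star ≠ varSym) (h₂ : star ≠ sSym) (h₃ : varSym ≠ sSym) :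
    Function.Injective (encode (S := S) star) ∧
      ∀ (n : S) (e : Data S),
        encode star e ≠
          .consPar (.consSym varSym (.consSym sSym (.consSym n .nil))) .nil :=
  encode_injective_and_not_surjective_general star varSym sSym h₁
end

section
/- In the simple pattern-matching language, if every variable occurs at most once in the pattern p (linearity) and matching of ground data d against p succeeds producing an environment env, then applying the substitution env to p yields exactly d. -/
/-- Patterns: nil, an e-variable (binding the whole remaining data), an s-variable
followed by a pattern, a symbol followed by a pattern, or a parenthesized pattern
followed by a pattern. -/
inductive Pat (S : Type) : Type
  | nil : Pat S
  | evar (n : ℕ) : Pat S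
  | svar (n : ℕ) (p : Pat S) : Pat S
  | sym (σ : S) (p : Pat S) : Pat S
  | par (p₁ p₂ : Pat S) : Pat S

/-- Ground data: patterns with no variables. -/
inductive Dat (S : Type) : Type
  | nil : Dat S
  | sym (σ : S) (d : Dat S) : Dat S
  | par (d₁ d₂ : Dat S) : Dat S

/-- Environments bind variable names to either a symbol (s-variables) or a whole
datum (e-variables). -/
abbrev Env (S : Type) := List (ℕ × (S ⊕ Dat S))

/-- Structural matching of ground data against a pattern, producing an environment. -/
def pmatch {S : Type} [DecidableEq S] : Pat S → Dat S → Option (Env S)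
  | .nil, .nil => some []
  | .evar n, d => some [(n, Sum.inr d)]
  | .svar n p, .sym σ d => (pmatch p d).map (fun e => (n, Sum.inl σ) :: e)
  | .sym σ p, .sym τ d => if σ = τ then pmatch p d else none
  | .par p₁ p₂, .par d₁ d₂ => do
      let e₁ ← pmatch p₁ d₁
      let e₂ ← pmatch p₂ d₂
      pure (e₁ ++ e₂)
  | _, _ => none

def lookupS {S : Type} (env : Env S) (n : ℕ) : Option S :=
  match env.lookup n with
  | some (Sum.inl σ) => some σ
  | _ => none

def lookupE {S : Type} (env : Env S) (n : ℕ) : Option (Dat S) :=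
  match env.lookup n with
  | some (Sum.inr d) => some d
  | _ => none

/-- Applying an environment to a pattern, replacing variables by their values. -/
def subst {S : Type} (env : Env S) : Pat S → Option (Dat S)
  | .nil => some .nil
  | .evar n => lookupE env n
  | .svar n p => do
      let σ ← lookupS env n
      let d ← subst env p
      pure (.sym σ d)
  | .sym σ p => (subst env p).map (.sym σ)
  | .par p₁ p₂ => do
      let d₁ ← subst env p₁
      let d₂ ← subst env p₂
      pure (.par d₁ d₂)

/-- The list of variable names occurring in a pattern. -/
def Pat.vars {S : Type} : Pat S → List ℕ
  | .nil => []
  | .evar n => [n]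
  | .svar n p => n :: p.vars
  | .sym _ p => p.vars
  | .par p₁ p₂ => p₁.vars ++ p₂.vars

/-!
Matching records every variable of `p` together with the value it took, in order of occurrence,
so the keys of the resulting environment are exactly `p.vars`. Substitution rebuilds `d` under any
environment whose lookups return all these recorded values; linearity makes the keys distinct,
so first-match lookup in the matching environment itself returns them.
-/

theorem List.lookup_eq_some_of_mem {α β : Type*} [BEq α] [LawfulBEq α] {l : List (α × β)}
    {a : α} {b : β} (hl : (l.map Prod.fst).Nodup) (hab : (a, b) ∈ l) : l.lookup a = some b := by
  induction l with
  | nil => cases hab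
  | cons x l ih =>
    obtain ⟨k, v⟩ := x
    simp only [List.map_cons, List.nodup_cons] at hl
    rcases List.mem_cons.1 hab with hhead | htail
    · obtain ⟨rfl, rfl⟩ := Prod.mk.inj hhead
      exact List.lookup_cons_self
    · have hak : (a == k) = false := by
        rw [beq_eq_false_iff_ne]
        rintro rfl
        exact hl.1 (List.mem_map.2 ⟨_, htail, rfl⟩)
      simp [List.lookup_cons, hak, ih hl.2 htail]

variable {S : Type} [DecidableEq S]

theorem pmatch_par_eq_some {p₁ p₂ : Pat S} {d₁ d₂ : Dat S} {env : Env S} :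
    pmatch (.par p₁ p₂) (.par d₁ d₂) = some env ↔
      ∃ e₁ e₂, pmatch p₁ d₁ = some e₁ ∧ pmatch p₂ d₂ = some e₂ ∧ e₁ ++ e₂ = env := by
  simp [pmatch, Option.bind_eq_some_iff]

theorem map_fst_eq_vars_of_pmatch {p : Pat S} {d : Dat S} {env : Env S}
    (h : pmatch p d = some env) : env.map Prod.fst = p.vars := by
  fun_induction pmatch p d generalizing env with
  | case1 | case2 => cases h; rfl
  | case3 n p σ d ih =>
    obtain ⟨e, he, rfl⟩ := Option.map_eq_some_iff.1 h
    simp [Pat.vars, ih he]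
  | case4 p σ d ih => exact ih h
  | case5 | case7 => cases h
  | case6 p₁ p₂ d₁ d₂ ih₁ ih₂ =>
    obtain ⟨e₁, e₂, h₁, h₂, rfl⟩ := pmatch_par_eq_some.1 h
    simp [Pat.vars, ih₁ h₁, ih₂ h₂]

theorem subst_eq_of_pmatch_of_lookup_eq {p : Pat S} {d : Dat S} {env : Env S}
    (h : pmatch p d = some env) {env' : Env S} (hext : ∀ b ∈ env, env'.lookup b.1 = some b.2) :
    subst env' p = some d := by
  fun_induction pmatch p d generalizing env with
  | case1 => rfl
  | case2 n d =>
    cases h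
    simp [subst, lookupE, hext _ (List.mem_singleton_self _)]
  | case3 n p σ d ih =>
    obtain ⟨e, he, rfl⟩ := Option.map_eq_some_iff.1 h
    have hn : env'.lookup n = some (.inl σ) := hext _ List.mem_cons_self
    have hp : subst env' p = some d := ih he fun b hb => hext b (List.mem_cons_of_mem _ hb)
    simp [subst, lookupS, hn, hp]
  | case4 p σ d ih => simp [subst, ih h hext]
  | case5 | case7 => cases h
  | case6 p₁ p₂ d₁ d₂ ih₁ ih₂ =>
    obtain ⟨e₁, e₂, h₁, h₂, rfl⟩ := pmatch_par_eq_some.1 h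
    have hp₁ := ih₁ h₁ fun b hb => hext b (List.mem_append_left _ hb)
    have hp₂ := ih₂ h₂ fun b hb => hext b (List.mem_append_right _ hb)
    simp [subst, hp₁, hp₂]

/-- If the pattern `p` is linear (each variable occurs at most once) and matching
the ground data `d` against `p` succeeds with environment `env`, then applying the
substitution `env` to `p` yields exactly `d`. -/
theorem subst_of_pmatch {S : Type} [DecidableEq S]
    (p : Pat S) (d : Dat S) (env : Env S)
    (hlin : p.vars.Nodup) (h : pmatch p d = some env) :
    subst env p = some d := by
  refine subst_eq_of_pmatch_of_lookup_eq h fun b hb => List.lookup_eq_some_of_mem ?_ hb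
  rwa [map_fst_eq_vars_of_pmatch h]
end

section
/- In the Synapse N+1 counting model, the stronger invariant dirty + valid ≤ max over histories is not needed; instead show the invariant dirty ≤ 1 ∧ dirty * valid = 0 is inductive: it holds initially and is preserved by each of the five guarded transitions. -/
/-- A state of the counting abstraction: counters of invalid, dirty and valid
cache lines. -/
structure SynState where
  invalid : ℕ
  dirty : ℕ
  valid : ℕ

/-- The guarded transitions of the Synapse N+1 counting model. -/
inductive SynStep : SynState → SynState → Prop
  | rh (s : SynState) (h : s.dirty + s.valid ≥ 1) : SynStep s s
  | rm (s : SynState) (h : s.invalid ≥ 1) :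
      SynStep s ⟨s.invalid + s.dirty - 1, 0, s.valid + 1⟩
  | wh1 (s : SynState) (h : s.dirty ≥ 1) : SynStep s s
  | wh2 (s : SynState) (h : s.valid ≥ 1) :
      SynStep s ⟨s.invalid + s.dirty + s.valid - 1, 1, 0⟩
  | wm (s : SynState) (h : s.invalid ≥ 1) :
      SynStep s ⟨s.invalid + s.dirty + s.valid - 1, 1, 0⟩

/-- The invariant `P(i,d,v) := d ≤ 1 ∧ d * v = 0`. -/
def SynInv (s : SynState) : Prop := s.dirty ≤ 1 ∧ s.dirty * s.valid = 0

namespace SynInv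

theorem of_dirty_eq_zero {s : SynState} (h : s.dirty = 0) : SynInv s := by
  simp [SynInv, h]

theorem mk_one_zero (i : ℕ) : SynInv ⟨i, 1, 0⟩ := by
  simp [SynInv]

end SynInv

/-- Apart from the two stuttering steps `rh` and `wh1`, every transition lands either in a state
with no dirty line or in one of the form `(i, 1, 0)`, so the invariant is re-established without
being assumed. -/
theorem SynStep.synInv {s s' : SynState} (hstep : SynStep s s') (hs : SynInv s) : SynInv s' := by
  cases hstep with
  | rh => exact hs
  | wh1 => exact hs
  | rm => exact SynInv.of_dirty_eq_zero rfl
  | wh2 => exact SynInv.mk_one_zero _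
  | wm => exact SynInv.mk_one_zero _

/-- The invariant `dirty ≤ 1 ∧ dirty * valid = 0` is inductive: it holds in every
initial state `(n, 0, 0)` with `n ≥ 1` and is preserved by each of the five guarded
transitions. -/
theorem synapse_inv_inductive :
    (∀ n : ℕ, n ≥ 1 → SynInv ⟨n, 0, 0⟩) ∧
    (∀ s s' : SynState, SynStep s s' → SynInv s → SynInv s') :=
  ⟨fun _ _ => SynInv.of_dirty_eq_zero rfl, fun _ _ => SynStep.synInv⟩
end

section
/- The functional model of the Synapse N+1 protocol given as a recursive function over a finite event list terminates and is a total predicate returning True on all inputs whose induced transition sequences are realizable: for every finite list of events and every initial count n ≥ 1 represented in unary, the Loop function, defined by structural recursion on the event list and consuming one event per step, terminates; moreover if every event in the list has its guard satisfied at the point it is consumed, the result of the final Test is True. -/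
/-- The protocol events handled by the functional model. -/
inductive Ev : Type
  | rm | wh2 | wm

/-- A state of the unary-list model: the Invalid, Dirty and Valid counters, each a
list of unit symbols `I`. -/
abbrev UState := List Unit × List Unit × List Unit

/-- The partial event step of the functional Synapse N+1 model. -/
def Event : Ev → UState → Option UState
  | .rm, (_ :: is, ds, vs) => some (ds ++ is, [], () :: vs)
  | .wh2, (is, ds, _ :: vs) => some (vs ++ ds ++ is, [()], [])
  | .wm, (_ :: is, ds, vs) => some (vs ++ ds ++ is, [()], [])
  | _, _ => none

/-- The safety test: `False` iff Dirty and Valid are both nonempty, or Dirty has at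
least two elements. -/
def Test : UState → Bool
  | (_, ds, vs) => !((!ds.isEmpty && !vs.isEmpty) || decide (ds.length ≥ 2))

/-- The main loop, defined by structural recursion on the event list and consuming
one event per step (hence terminating on every input). -/
def Loop : List Ev → UState → Option Bool
  | [], s => some (Test s)
  | t :: ts, s => (Event t s).bind (Loop ts)

/-! Each defined event step ends either with Dirty empty or with Dirty = [I] and Valid empty,
so `Test` holds after every step; it also holds initially, where Dirty and Valid are empty. -/

theorem test_eq_true_of_event_eq_some {t : Ev} {s s' : UState} (h : Event t s = some s') :
    Test s' = true := by
  cases t <;> rcases s with ⟨_ | _, _, _ | _⟩ <;>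
    simp only [Event, reduceCtorEq, Option.some.injEq] at h <;> subst h <;> rfl

theorem loop_eq_some_true {evs : List Ev} {s : UState} (hs : Test s = true)
    (h : (Loop evs s).isSome) : Loop evs s = some true := by
  induction evs generalizing s with
  | nil => rw [Loop, hs]
  | cons t ts ih =>
    cases he : Event t s with
    | none => simp [Loop, he] at h
    | some s' =>
      simp only [Loop, he, Option.bind_some] at h ⊢
      exact ih (test_eq_true_of_event_eq_some he) h

/-- The functional unary-list model of Synapse N+1 inherits the safety invariant:
`Loop` is a total function, and for every finite event list whose induced transition
sequence is realizable (all `Event` steps are defined) from the initial state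
`(Iⁿ, [], [])` with `n ≥ 1`, the final `Test` returns `True`. -/
theorem loop_total_and_safe :
    (∀ (evs : List Ev) (s : UState), ∃ r : Option Bool, Loop evs s = r) ∧
    (∀ (n : ℕ), n ≥ 1 → ∀ evs : List Ev,
      (Loop evs (List.replicate n (), [], [])).isSome →
      Loop evs (List.replicate n (), [], []) = some true) :=
  ⟨fun _ _ => ⟨_, rfl⟩, fun _ _ _ => loop_eq_some_true rfl⟩
end
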